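/- For i-neighbouring datasets d and d̃ (differing exactly in coordinate i), the score σ_φ(d,r) := max_{d' : φ(d') = r} (−∑_{j : d_j ≠ d'_j} ε_j) satisfies |σ_φ(d,r) − σ_φ(d̃,r)| ≤ ε_i for every r in the range of φ, provided the max is attained (e.g., the domain is finite) and {d' : φ(d') = r} is nonempty. -/

import Mathlib

/-! The maximiser `d'` for the score of `d` is also a candidate for the score of `dt`, and its set of
disagreements with `dt` differs from that with `d` at most in `i`, so its weight changes by at most
`ε i`. Exchanging `d` and `dt` gives the other inequality. -/

open Finset

section

variable {ι M : Type*} [DecidableEq ι] [AddCommMonoid M] [PartialOrder M] [IsOrderedAddMonoid M]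

theorem Finset.sum_le_sum_add_of_subset_insert {f : ι → M} (hf : ∀ j, 0 ≤ f j) {s t : Finset ι}
    {i : ι} (h : s ⊆ insert i t) : ∑ j ∈ s, f j ≤ ∑ j ∈ t, f j + f i := calc
  ∑ j ∈ s, f j ≤ ∑ j ∈ insert i t, f j := sum_le_sum_of_subset_of_nonneg h fun j _ _ ↦ hf j
  _ ≤ ∑ j ∈ t, f j + f i := by
    by_cases hi : i ∈ t
    · rw [insert_eq_of_mem hi]
      exact le_add_of_nonneg_right (hf i)
    · rw [sum_insert hi, add_comm]

theorem Finset.filter_ne_subset_insert_filter_ne [Fintype ι] {α : Type*} [DecidableEq α]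
    {x y : ι → α} {i : ι} (hxy : ∀ j ≠ i, x j = y j) (z : ι → α) :
    univ.filter (fun j ↦ x j ≠ z j) ⊆ insert i (univ.filter fun j ↦ y j ≠ z j) := by
  intro j hj
  rw [mem_insert, mem_filter]
  by_cases hji : j = i
  · exact Or.inl hji
  · exact Or.inr ⟨mem_univ j, hxy j hji ▸ (mem_filter.1 hj).2⟩

end

theorem le_add_of_mem_of_mem_upperBounds {α M : Type*} [Preorder M] [Add M] [AddRightMono M]
    {p : α → Prop} {f g : α → M} {a b c : M} (hfg : ∀ x, f x ≤ g x + c)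
    (ha : a ∈ {v | ∃ x, p x ∧ v = f x}) (hb : b ∈ upperBounds {v | ∃ x, p x ∧ v = g x}) :
    a ≤ b + c := by
  obtain ⟨x, hx, rfl⟩ := ha
  exact le_add_of_le_add_right (hfg x) (hb ⟨x, hx, rfl⟩)

theorem pe_score_lipschitz_general {n : ℕ} {D R : Type*} [DecidableEq D]
    (φ : (Fin n → D) → R) (ε : Fin n → ℝ) (hε : ∀ j, 0 ≤ ε j)
    (σ : (Fin n → D) → R → ℝ)
    (hσ : ∀ (d : Fin n → D) (r : R), (∃ d₀, φ d₀ = r) → IsGreatest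
      {v : ℝ | ∃ d', φ d' = r ∧
        v = -∑ j ∈ Finset.univ.filter (fun j => d j ≠ d' j), ε j} (σ d r))
    (i : Fin n) (d dt : Fin n → D) (heq : ∀ j, j ≠ i → d j = dt j)
    (r : R) (hr : ∃ d₀, φ d₀ = r) :
    |σ d r - σ dt r| ≤ ε i := by
  have score_sub_le : ∀ x y : Fin n → D, (∀ j ≠ i, x j = y j) → σ x r - σ y r ≤ ε i := by
    intro x y hxy
    refine sub_le_iff_le_add'.2 <| le_add_of_mem_of_mem_upperBounds (fun z ↦ ?_)
      (hσ x r hr).1 (hσ y r hr).2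
    have := sum_le_sum_add_of_subset_insert hε
      (filter_ne_subset_insert_filter_ne (fun j hj ↦ (hxy j hj).symm) z)
    linarith
  rw [abs_sub_le_iff]
  exact ⟨score_sub_le d dt heq, score_sub_le dt d fun j hj ↦ (heq j hj).symm⟩

theorem pe_score_lipschitz {n : ℕ} {D R : Type*} [DecidableEq D]
    (φ : (Fin n → D) → R) (ε : Fin n → ℝ) (hε : ∀ j, 0 ≤ ε j)
    (σ : (Fin n → D) → R → ℝ)
    (hσ : ∀ (d : Fin n → D) (r : R), (∃ d₀, φ d₀ = r) → IsGreatest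
      {v : ℝ | ∃ d', φ d' = r ∧
        v = -∑ j ∈ Finset.univ.filter (fun j => d j ≠ d' j), ε j} (σ d r))
    (i : Fin n) (d dt : Fin n → D) (hne : d i ≠ dt i) (heq : ∀ j, j ≠ i → d j = dt j)
    (r : R) (hr : ∃ d₀, φ d₀ = r) :
    |σ d r - σ dt r| ≤ ε i :=
  pe_score_lipschitz_general φ ε hε σ hσ i d dt heq r hr
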